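/- arXiv:1810.11397 — 3 statements merged into one kernel-verified Lean document; each statement's English description precedes it below -/
import Mathlib

section
/- Let E be a random variable on (0,1] satisfying P[E ≤ x] = c·x^{γ-1} for c > 0 and γ ∈ (1,2), and suppose Y is a bounded random variable with E[Y | E = t, D = 1] → μ₁ ≠ 0 as t ↓ 0, where D is Bernoulli with P[D=1|E] = E. Then the trimming bias B_b := -E[D·Y/E · 1_{E < b}] = -E[E[Y|E,D=1]·1_{E < b}] satisfies B_b = -μ₁·c·b^{γ-1}·(1+o(1)) as b ↓ 0. -/
/-!
On `{E < b}` every value of `E` lies in `(0, b)`, so as `b ↓ 0` the average of `m ∘ E` over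
`{E < b}` tends to `μ₁`. Since the distribution function `c x^(γ-1)` is continuous, the mass of
`{E < b}` is exactly `c b^(γ-1)`, and the bias is this mass times that average.
-/

open MeasureTheory Filter Set Topology

section

variable {Ω : Type*} [MeasurableSpace Ω] {μ : Measure Ω} [IsFiniteMeasure μ]

theorem measureReal_lt_eq_of_measureReal_le_eq {X : Ω → ℝ} {F : ℝ → ℝ} {a b : ℝ}
    (hab : a < b) (hF : ∀ x ∈ Ioc a b, μ.real {ω | X ω ≤ x} = F x)
    (hFb : ContinuousWithinAt F (Iio b) b) :
    μ.real {ω | X ω < b} = F b := by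
  apply le_antisymm
  · calc μ.real {ω | X ω < b} ≤ μ.real {ω | X ω ≤ b} :=
          measureReal_mono fun ω (h : X ω < b) => h.le
      _ = F b := hF b ⟨hab, le_rfl⟩
  · refine le_of_tendsto hFb ?_
    filter_upwards [Ioo_mem_nhdsLT hab] with x hx
    rw [← hF x ⟨hx.1, hx.2.le⟩]
    exact measureReal_mono fun ω (h : X ω ≤ x) => h.trans_lt hx.2

theorem abs_setIntegral_div_measureReal_sub_le {s : Set Ω} (hs : MeasurableSet s)
    (hμs : 0 < μ.real s) {g : Ω → ℝ} (hg : AEStronglyMeasurable g μ) {L ε : ℝ}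
    (hgL : ∀ ω ∈ s, |g ω - L| ≤ ε) :
    |(∫ ω in s, g ω ∂μ) / μ.real s - L| ≤ ε := by
  have hint : IntegrableOn g s μ :=
    Measure.integrableOn_of_bounded (measure_ne_top μ s) hg (M := |L| + ε)
      ((ae_restrict_iff' hs).2 <| ae_of_all _ fun ω hω => by
        have := hgL ω hω
        rw [Real.norm_eq_abs]
        linarith [abs_sub_abs_le_abs_sub (g ω) L])
  have hdiff : (∫ ω in s, g ω ∂μ) - μ.real s * L = ∫ ω in s, (g ω - L) ∂μ := by
    rw [integral_sub hint (integrableOn_const (measure_ne_top μ s)), setIntegral_const,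
      smul_eq_mul]
  have hbound : |∫ ω in s, (g ω - L) ∂μ| ≤ ε * μ.real s := by
    simpa only [Real.norm_eq_abs] using
      norm_setIntegral_le_of_norm_le_const (f := fun ω => g ω - L) (measure_lt_top μ s) hgL
  rw [div_sub' hμs.ne', abs_div, abs_of_pos hμs, div_le_iff₀ hμs, hdiff]
  exact hbound

theorem tendsto_setIntegral_div_measureReal_lt {X : Ω → ℝ} (hX : Measurable X)
    (hXpos : ∀ ω, 0 < X ω) {f : ℝ → ℝ} (hf : Measurable f) {L : ℝ}
    (hfL : Tendsto f (𝓝[>] 0) (𝓝 L)) (hpos : ∀ᶠ b in 𝓝[>] 0, 0 < μ.real {ω | X ω < b}) :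
    Tendsto (fun b => (∫ ω in {ω | X ω < b}, f (X ω) ∂μ) / μ.real {ω | X ω < b})
      (𝓝[>] 0) (𝓝 L) := by
  rw [Metric.tendsto_nhds]
  intro ε hε
  obtain ⟨δ, hδ, hfδ⟩ := Metric.tendsto_nhdsWithin_nhds.1 hfL (ε / 2) (half_pos hε)
  filter_upwards [hpos, Ioo_mem_nhdsGT hδ] with b hb hbδ
  refine (abs_setIntegral_div_measureReal_sub_le (hX measurableSet_Iio) hb
    (hf.comp hX).aestronglyMeasurable fun ω (hω : X ω < b) => ?_).trans_lt (half_lt_self hε)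
  refine (hfδ (hXpos ω) ?_).le
  rw [Real.dist_0_eq_abs, abs_of_pos (hXpos ω)]
  exact hω.trans hbδ.2

end

theorem stmt4_general
    {Ω : Type*} [MeasurableSpace Ω] (ℙ : Measure Ω) [IsProbabilityMeasure ℙ]
    (E : Ω → ℝ) (hmeas : Measurable E) (hE : ∀ ω, E ω ∈ Set.Ioc (0 : ℝ) 1)
    (c γ : ℝ) (hc : 0 < c)
    (hF : ∀ x ∈ Set.Ioc (0 : ℝ) 1, (ℙ {ω | E ω ≤ x}).toReal = c * x ^ (γ - 1))
    (m : ℝ → ℝ) (hm_meas : Measurable m)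
    (μ₁ : ℝ) (hμ₁ : μ₁ ≠ 0)
    (hlim : Tendsto m (nhdsWithin 0 (Set.Ioi 0)) (nhds μ₁)) :
    Tendsto (fun b : ℝ =>
        (-(∫ ω, if E ω < b then m (E ω) else 0 ∂ℙ)) / (-(μ₁ * c * b ^ (γ - 1))))
      (nhdsWithin 0 (Set.Ioi 0)) (nhds 1) := by
  have hP : ∀ b ∈ Ioc (0 : ℝ) 1, ℙ.real {ω | E ω < b} = c * b ^ (γ - 1) := fun b hb =>
    measureReal_lt_eq_of_measureReal_le_eq hb.1 (fun x hx => hF x ⟨hx.1, hx.2.trans hb.2⟩)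
      ((Real.continuousAt_rpow_const b _ (Or.inl hb.1.ne')).const_mul c).continuousWithinAt
  have hsmall : Ioc (0 : ℝ) 1 ∈ 𝓝[>] 0 := Ioc_mem_nhdsGT one_pos
  have hmean := tendsto_setIntegral_div_measureReal_lt (μ := ℙ) hmeas (fun ω => (hE ω).1)
    hm_meas hlim (by
      filter_upwards [hsmall] with b hb
      rw [hP b hb]
      exact mul_pos hc (Real.rpow_pos_of_pos hb.1 _))
  have hratio := hmean.div_const μ₁
  rw [div_self hμ₁] at hratio
  refine hratio.congr' ?_
  filter_upwards [hsmall] with b hb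
  have hI : ∫ ω, (if E ω < b then m (E ω) else 0) ∂ℙ = ∫ ω in {ω | E ω < b}, m (E ω) ∂ℙ :=
    integral_indicator (hmeas measurableSet_Iio)
  rw [hP b hb, hI, neg_div_neg_eq, div_div, mul_comm, mul_assoc]

/-- Trimming bias asymptotics: with `P[E ≤ x] = c x^(γ-1)`, `γ ∈ (1,2)`, and the
conditional mean `m(t) = E[Y | E = t, D = 1]` bounded with `m(t) → μ₁ ≠ 0` as `t ↓ 0`,
the trimming bias `B_b = -E[m(E) 1_{E < b}]` satisfies `B_b = -μ₁ c b^(γ-1) (1+o(1))`. -/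
theorem stmt4
    {Ω : Type*} [MeasurableSpace Ω] (ℙ : Measure Ω) [IsProbabilityMeasure ℙ]
    (E : Ω → ℝ) (hmeas : Measurable E) (hE : ∀ ω, E ω ∈ Set.Ioc (0 : ℝ) 1)
    (c γ : ℝ) (hc : 0 < c) (hγ : γ ∈ Set.Ioo (1 : ℝ) 2)
    (hF : ∀ x ∈ Set.Ioc (0 : ℝ) 1, (ℙ {ω | E ω ≤ x}).toReal = c * x ^ (γ - 1))
    (m : ℝ → ℝ) (hm_meas : Measurable m) (M : ℝ) (hbdd : ∀ t, |m t| ≤ M)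
    (μ₁ : ℝ) (hμ₁ : μ₁ ≠ 0)
    (hlim : Tendsto m (nhdsWithin 0 (Set.Ioi 0)) (nhds μ₁)) :
    Tendsto (fun b : ℝ =>
        (-(∫ ω, if E ω < b then m (E ω) else 0 ∂ℙ)) / (-(μ₁ * c * b ^ (γ - 1))))
      (nhdsWithin 0 (Set.Ioi 0)) (nhds 1) :=
  stmt4_general ℙ E hmeas hE c γ hc hF m hm_meas μ₁ hμ₁ hlim
end

section
/- Let F : (0,∞) → [0,∞) be nondecreasing with F(b) > 0 for all b > 0 and regularly varying at 0 with index γ-1 > 0 (i.e., F(tb)/F(t) → b^{γ-1} as t ↓ 0). Fix s > 0 and K > 0. If b_n solves b_n^s·F(b_n) = K/n and b̂_n solves b̂_n^s·F(b̂_n) = K_n/n with K_n/K → 1, then b̂_n/b_n → 1. -/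
open Filter Set Topology

/-! Since `F` is nondecreasing, `G x = x ^ s * F x` grows at least like `x ^ s`:
`G y / G x ≥ (y / x) ^ s` for `0 < x ≤ y`. So with `ρₙ = G b̂ₙ / G bₙ = Kₙ / K → 1` we get
`b̂ₙ / bₙ ≤ max 1 (ρₙ ^ (1/s))` and symmetrically `bₙ / b̂ₙ ≤ max 1 (ρₙ ^ (-1/s))`. -/

lemma div_rpow_mul_rpow_mul_le_of_monotoneOn {F : ℝ → ℝ} (hF : MonotoneOn F (Ioi 0))
    (s : ℝ) {x y : ℝ} (hx : 0 < x) (hxy : x ≤ y) :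
    (y / x) ^ s * (x ^ s * F x) ≤ y ^ s * F y := by
  have hy : 0 < y := hx.trans_le hxy
  calc (y / x) ^ s * (x ^ s * F x) = y ^ s * F x := by
        rw [Real.div_rpow hy.le hx.le, ← mul_assoc,
          div_mul_cancel₀ _ (Real.rpow_pos_of_pos hx s).ne']
    _ ≤ y ^ s * F y := mul_le_mul_of_nonneg_left (hF hx hy hxy) (Real.rpow_nonneg hy.le s)

section PowerGrowth

variable {G : ℝ → ℝ} {s : ℝ} (hs : 0 < s)
  (hG : ∀ x y, 0 < x → x ≤ y → (y / x) ^ s * G x ≤ G y) (hGpos : ∀ x, 0 < x → 0 < G x)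
include hs hG hGpos

lemma div_le_max_one_rpow_div {x y : ℝ} (hx : 0 < x) (hy : 0 < y) :
    y / x ≤ max 1 ((G y / G x) ^ s⁻¹) := by
  rcases le_total y x with hyx | hxy
  · exact ((div_le_one hx).2 hyx).trans (le_max_left _ _)
  · have hpow : (y / x) ^ s ≤ G y / G x := (le_div_iff₀ (hGpos x hx)).2 (hG x y hx hxy)
    calc y / x = ((y / x) ^ s) ^ s⁻¹ := (Real.rpow_rpow_inv (by positivity) hs.ne').symm
      _ ≤ (G y / G x) ^ s⁻¹ := Real.rpow_le_rpow (by positivity) hpow (inv_nonneg.2 hs.le)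
      _ ≤ _ := le_max_right _ _

lemma tendsto_div_of_tendsto_apply_div {ι : Type*} {l : Filter ι} {u v : ι → ℝ}
    (hu : ∀ i, 0 < u i) (hv : ∀ i, 0 < v i)
    (h : Tendsto (fun i => G (v i) / G (u i)) l (𝓝 1)) :
    Tendsto (fun i => v i / u i) l (𝓝 1) := by
  have hmax {ρ : ι → ℝ} (hρ : Tendsto ρ l (𝓝 1)) :
      Tendsto (fun i => max 1 (ρ i ^ s⁻¹)) l (𝓝 1) := by
    simpa using
      (tendsto_const_nhds (x := (1 : ℝ))).max (hρ.rpow_const (p := s⁻¹) (Or.inl one_ne_zero))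
  have hswap : Tendsto (fun i => G (u i) / G (v i)) l (𝓝 1) := by
    simpa using h.inv₀ one_ne_zero
  refine tendsto_of_tendsto_of_tendsto_of_le_of_le
    (by simpa using (hmax hswap).inv₀ one_ne_zero) (hmax h) (fun i => ?_)
    (fun i => div_le_max_one_rpow_div hs hG hGpos (hu i) (hv i))
  simpa using inv_anti₀ (div_pos (hu i) (hv i))
    (div_le_max_one_rpow_div hs hG hGpos (hv i) (hu i))

end PowerGrowth

theorem stmt7_general (F : ℝ → ℝ) (hmono : MonotoneOn F (Set.Ioi 0))
    (hFpos : ∀ b : ℝ, 0 < b → 0 < F b)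
    (s K : ℝ) (hs : 0 < s) (hK : 0 < K)
    (b bh : ℕ → ℝ) (Kn : ℕ → ℝ)
    (hb : ∀ n, 0 < b n) (hbh : ∀ n, 0 < bh n)
    (heq : ∀ n : ℕ, 1 ≤ n → (b n) ^ s * F (b n) = K / n)
    (heqh : ∀ n : ℕ, 1 ≤ n → (bh n) ^ s * F (bh n) = Kn n / n)
    (hKn : Tendsto Kn atTop (nhds K)) :
    Tendsto (fun n => bh n / b n) atTop (nhds 1) := by
  have hKn_div : Tendsto (fun n => Kn n / K) atTop (𝓝 1) := by
    simpa [hK.ne'] using hKn.div_const K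
  have hratio : Tendsto (fun n => bh n ^ s * F (bh n) / (b n ^ s * F (b n))) atTop (𝓝 1) := by
    refine hKn_div.congr' ?_
    filter_upwards [eventually_ge_atTop 1] with n hn
    have hn0 : (n : ℝ) ≠ 0 := by positivity
    rw [heq n hn, heqh n hn, div_div_div_cancel_right₀ hn0]
  exact tendsto_div_of_tendsto_apply_div hs
    (fun x y hx hxy => div_rpow_mul_rpow_mul_le_of_monotoneOn hmono s hx hxy)
    (fun x hx => mul_pos (Real.rpow_pos_of_pos hx s) (hFpos x hx)) hb hbh hratio

/-- Consistency of the data-driven trimming threshold: `F` nondecreasing, positive and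
regularly varying at 0 with index `γ-1 > 0`. If `b_n` solves `b^s F(b) = K/n` and
`b̂_n` solves `b^s F(b) = K_n/n` with `K_n → K`, then `b̂_n / b_n → 1`. -/
theorem stmt7 (F : ℝ → ℝ) (hmono : MonotoneOn F (Set.Ioi 0))
    (hFpos : ∀ b : ℝ, 0 < b → 0 < F b)
    (γ : ℝ) (hγ : 1 < γ)
    (hRV : ∀ b : ℝ, 0 < b →
      Tendsto (fun t : ℝ => F (t * b) / F t) (nhdsWithin 0 (Set.Ioi 0))
        (nhds (b ^ (γ - 1))))
    (s K : ℝ) (hs : 0 < s) (hK : 0 < K)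
    (b bh : ℕ → ℝ) (Kn : ℕ → ℝ)
    (hb : ∀ n, 0 < b n) (hbh : ∀ n, 0 < bh n)
    (heq : ∀ n : ℕ, 1 ≤ n → (b n) ^ s * F (b n) = K / n)
    (heqh : ∀ n : ℕ, 1 ≤ n → (bh n) ^ s * F (bh n) = Kn n / n)
    (hKn : Tendsto Kn atTop (nhds K)) :
    Tendsto (fun n => bh n / b n) atTop (nhds 1) :=
  stmt7_general F hmono hFpos s K hs hK b bh Kn hb hbh heq heqh hKn
end

section
/- Suppose E is a random variable on (0,1] with distribution function G(x) = P[E ≤ x] satisfying G(x)/x^{γ-1} → c > 0 as x ↓ 0, with γ ∈ (1,2), and let D be Bernoulli given E with P[D=1|E] = E. Let W = D/E. Then x·P[W > x]/G(1/x) → (γ-1)/γ as x → ∞; in particular P[W > x] ~ c·((γ-1)/γ)·x^{-γ}. -/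
/-!
On `{D = 1}` the conditional law of `D` gives `P[W > x] = E[E; E < u]` with `u = 1/x`, and the
layer-cake formula turns this into `u P[E < u] - ∫₀ᵘ G`. As `G` is regularly varying at `0` with
index `γ - 1`, `∫₀ᵘ G ~ u G(u) / γ`, and `P[E < u] ~ G(u)` because `P[E < u]` lies between
`G(θu) ~ θ^(γ-1) G(u)` and `G(u)` for every `θ < 1`. Hence `x P[W > x] / G(1/x) → 1 - 1/γ`.
-/

open MeasureTheory Filter Set Topology

section RegularVariation

variable {G : ℝ → ℝ} {c α γ : ℝ}

lemma tendsto_comp_mul_div_of_tendsto_div_rpow (hc : c ≠ 0)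
    (hG : Tendsto (fun u => G u / u ^ α) (𝓝[>] 0) (𝓝 c)) (hGne : ∀ u, 0 < u → G u ≠ 0)
    {θ : ℝ} (hθ : 0 < θ) :
    Tendsto (fun u => G (θ * u) / G u) (𝓝[>] 0) (𝓝 (θ ^ α)) := by
  have hθu : Tendsto (θ * ·) (𝓝[>] 0) (𝓝[>] 0) :=
    tendsto_comap.mono_left (comap_mulLeft_nhdsGT_zero hθ).ge
  have h := ((hG.comp hθu).mul (hG.inv₀ hc)).mul_const (θ ^ α)
  rw [mul_inv_cancel₀ hc, one_mul] at h
  refine h.congr' ?_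
  filter_upwards [self_mem_nhdsWithin] with u (hu : 0 < u)
  have := hGne u hu
  have := Real.rpow_pos_of_pos hθ α
  have := Real.rpow_pos_of_pos hu α
  simp only [Function.comp_apply, Real.mul_rpow hθ.le hu.le]
  field_simp

lemma tendsto_div_of_tendsto_div_rpow_of_le_of_lt_le (hc : c ≠ 0)
    (hG : Tendsto (fun u => G u / u ^ α) (𝓝[>] 0) (𝓝 c)) (hGpos : ∀ u, 0 < u → 0 < G u)
    {G' : ℝ → ℝ} (hG'le : ∀ u, G' u ≤ G u) (hleG' : ∀ t u, t < u → G t ≤ G' u) :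
    Tendsto (fun u => G' u / G u) (𝓝[>] 0) (𝓝 1) := by
  refine tendsto_order.2 ⟨fun a ha => ?_, fun b hb => ?_⟩
  · have hpow : Tendsto (fun θ : ℝ => θ ^ α) (𝓝[<] 1) (𝓝 1) := by
      simpa using ((Real.continuousAt_rpow_const 1 α (Or.inl one_ne_zero)).tendsto).mono_left
        nhdsWithin_le_nhds
    obtain ⟨θ, haθ, hθ0, hθ1⟩ :=
      ((hpow.eventually (eventually_gt_nhds ha)).and (Ioo_mem_nhdsLT zero_lt_one)).exists
    have hθG := tendsto_comp_mul_div_of_tendsto_div_rpow hc hG (fun u hu => (hGpos u hu).ne') hθ0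
    filter_upwards [hθG.eventually (eventually_gt_nhds haθ), self_mem_nhdsWithin]
      with u hu (hu0 : 0 < u)
    exact hu.trans_le (div_le_div_of_nonneg_right (hleG' _ _ (by nlinarith)) (hGpos u hu0).le)
  · filter_upwards [self_mem_nhdsWithin] with u (hu : 0 < u)
    exact (div_le_one_of_le₀ (hG'le u) (hGpos u hu).le).trans_lt hb

lemma tendsto_intervalIntegral_div_rpow (hmono : Monotone G) (hγ : 0 < γ)
    (hG : Tendsto (fun u => G u / u ^ (γ - 1)) (𝓝[>] 0) (𝓝 c)) :
    Tendsto (fun u => (∫ t in (0:ℝ)..u, G t) / u ^ γ) (𝓝[>] 0) (𝓝 (c / γ)) := by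
  have hint : ∀ u, IntervalIntegrable (fun t => t ^ (γ - 1)) volume 0 u := fun u =>
    intervalIntegral.intervalIntegrable_rpow' (by linarith)
  have hpow : ∀ u, ∫ t in (0:ℝ)..u, t ^ (γ - 1) = u ^ γ / γ := fun u => by
    rw [integral_rpow (Or.inl (by linarith)), sub_add_cancel, Real.zero_rpow hγ.ne', sub_zero]
  rw [Metric.tendsto_nhdsWithin_nhds] at hG ⊢
  intro ε hε
  obtain ⟨δ, hδ, hGδ⟩ := hG (ε * γ / 2) (by positivity)
  refine ⟨δ, hδ, fun u (hu : 0 < u) hud => ?_⟩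
  rw [Real.dist_eq, sub_zero, abs_of_pos hu] at hud
  have hpt : ∀ t ∈ Ioc 0 u, ‖G t - c * t ^ (γ - 1)‖ ≤ ε * γ / 2 * t ^ (γ - 1) := by
    rintro t ⟨ht0, htu⟩
    have htp := Real.rpow_pos_of_pos ht0 (γ - 1)
    have h := hGδ ht0 (by rw [Real.dist_eq, sub_zero, abs_of_pos ht0]; linarith)
    rw [Real.dist_eq, div_sub' htp.ne', abs_div, abs_of_pos htp, div_lt_iff₀ htp] at h
    rw [Real.norm_eq_abs, mul_comm c]
    exact h.le
  have hbound : |(∫ t in (0:ℝ)..u, G t) - c * (u ^ γ / γ)| ≤ ε * γ / 2 * (u ^ γ / γ) := by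
    rw [← hpow, ← intervalIntegral.integral_const_mul, ← intervalIntegral.integral_const_mul,
      ← intervalIntegral.integral_sub hmono.intervalIntegrable ((hint u).const_mul c)]
    exact intervalIntegral.norm_integral_le_of_norm_le hu.le (ae_of_all _ hpt)
      ((hint u).const_mul _)
  have hup := Real.rpow_pos_of_pos hu γ
  rw [Real.dist_eq, show (∫ t in (0:ℝ)..u, G t) / u ^ γ - c / γ
      = ((∫ t in (0:ℝ)..u, G t) - c * (u ^ γ / γ)) / u ^ γ by field_simp,
    abs_div, abs_of_pos hup, div_lt_iff₀ hup]
  calc _ ≤ ε * γ / 2 * (u ^ γ / γ) := hbound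
    _ < ε * u ^ γ := by field_simp; nlinarith

lemma tendsto_mul_sub_intervalIntegral_div_mul (hγ : 0 < γ) (hc : c ≠ 0)
    (hmono : Monotone G) (hG : Tendsto (fun u => G u / u ^ (γ - 1)) (𝓝[>] 0) (𝓝 c))
    (hGpos : ∀ u, 0 < u → 0 < G u)
    {G' : ℝ → ℝ} (hG'le : ∀ u, G' u ≤ G u) (hleG' : ∀ t u, t < u → G t ≤ G' u) :
    Tendsto (fun u => (u * G' u - ∫ t in (0:ℝ)..u, G t) / (u * G u)) (𝓝[>] 0)
      (𝓝 ((γ - 1) / γ)) := by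
  have h := (tendsto_div_of_tendsto_div_rpow_of_le_of_lt_le hc hG hGpos hG'le hleG').sub
    ((tendsto_intervalIntegral_div_rpow hmono hγ hG).mul (hG.inv₀ hc))
  rw [show (1 : ℝ) - c / γ * c⁻¹ = (γ - 1) / γ by field_simp] at h
  refine h.congr' ?_
  filter_upwards [self_mem_nhdsWithin] with u (hu : 0 < u)
  have := hGpos u hu
  have := Real.rpow_pos_of_pos hu γ
  rw [Real.rpow_sub_one hu.ne']
  field_simp

end RegularVariation

lemma monotone_measureReal_setOf_le {Ω : Type*} [MeasurableSpace Ω] (μ : Measure Ω)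
    [IsFiniteMeasure μ] (X : Ω → ℝ) : Monotone fun t => μ.real {ω | X ω ≤ t} :=
  fun _ _ hab => measureReal_mono fun _ h => le_trans h hab

lemma setIntegral_lt_eq_mul_sub_intervalIntegral {Ω : Type*} [MeasurableSpace Ω]
    (μ : Measure Ω) [IsFiniteMeasure μ] {X : Ω → ℝ} (hX : Measurable X) (hX0 : 0 ≤ᵐ[μ] X)
    {u : ℝ} (hu : 0 ≤ u) :
    ∫ ω in X ⁻¹' Iio u, X ω ∂μ
      = u * μ.real {ω | X ω < u} - ∫ t in (0:ℝ)..u, μ.real {ω | X ω ≤ t} := by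
  set s := X ⁻¹' Iio u
  have hs : MeasurableSet s := hX measurableSet_Iio
  have hint : Integrable X (μ.restrict s) := by
    refine Integrable.mono' (integrable_const u) hX.aestronglyMeasurable ?_
    filter_upwards [ae_restrict_of_ae hX0, ae_restrict_mem hs] with ω h0 (hsω : X ω < u)
    rw [Real.norm_eq_abs, abs_of_nonneg h0]
    exact hsω.le
  have hmeas : ∀ t, MeasurableSet {ω | t < X ω} := fun t => hX measurableSet_Ioi
  have htail : ∀ t ∈ Ioo 0 u, (μ.restrict s).real {ω | t < X ω}
      = μ.real {ω | X ω < u} - μ.real {ω | X ω ≤ t} := by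
    rintro t ⟨-, htu⟩
    have hsdiff : {ω | t < X ω} ∩ s = s \ {ω | X ω ≤ t} := by
      ext ω
      simp only [mem_inter_iff, mem_ofPred_eq, Set.mem_sdiff, not_le, s, mem_preimage, mem_Iio]
      tauto
    rw [measureReal_restrict_apply (hmeas t), hsdiff,
      measureReal_sdiff (μ := μ) (s₁ := s) (s₂ := {ω | X ω ≤ t})
        (fun ω h => show X ω < u from h.trans_lt htu) (hX measurableSet_Iic)]
    rfl
  have hvanish : ∀ t ∈ Ioi 0 \ Ioo 0 u, (μ.restrict s).real {ω | t < X ω} = 0 := by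
    rintro t ⟨ht0, htu⟩
    have hut : u ≤ t := le_of_not_gt fun h => htu ⟨ht0, h⟩
    rw [measureReal_restrict_apply (hmeas t)]
    convert measureReal_empty (μ := μ)
    ext ω
    simp only [mem_inter_iff, mem_ofPred_eq, s, mem_preimage, mem_Iio, mem_empty_iff_false,
      iff_false, not_and, not_lt]
    intro h
    linarith
  rw [hint.integral_eq_integral_meas_lt (ae_restrict_of_ae hX0),
    setIntegral_eq_of_subset_of_forall_sdiff_eq_zero measurableSet_Ioi Ioo_subset_Ioi_self hvanish,
    setIntegral_congr_fun measurableSet_Ioo htail, ← integral_Ioc_eq_integral_Ioo,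
    ← intervalIntegral.integral_of_le hu,
    intervalIntegral.integral_sub intervalIntegrable_const
      (monotone_measureReal_setOf_le μ X).intervalIntegrable,
    intervalIntegral.integral_const, smul_eq_mul, sub_zero]

lemma setOf_div_gt_eq_inter {Ω : Type*} {D E : Ω → ℝ} (hE : ∀ ω, 0 < E ω)
    (hD : ∀ ω, D ω = 0 ∨ D ω = 1) {x : ℝ} (hx : 0 < x) :
    {ω | D ω / E ω > x} = {ω | D ω = 1} ∩ E ⁻¹' Iio x⁻¹ := by
  ext ω
  rcases hD ω with h | h
  · simp [h, hx.le]
  · simp [h, lt_inv_comm₀ hx (hE ω)]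

lemma measureReal_div_gt_eq {Ω : Type*} [MeasurableSpace Ω] (μ : Measure Ω) [IsFiniteMeasure μ]
    {D E : Ω → ℝ} (hEmeas : Measurable E) (hE : ∀ ω, 0 < E ω) (hD : ∀ ω, D ω = 0 ∨ D ω = 1)
    (hBern : ∀ s : Set ℝ, MeasurableSet s →
      μ ({ω | D ω = 1} ∩ E ⁻¹' s) = ENNReal.ofReal (∫ ω in E ⁻¹' s, E ω ∂μ))
    {x : ℝ} (hx : 0 < x) :
    μ.real {ω | D ω / E ω > x}
      = x⁻¹ * μ.real {ω | E ω < x⁻¹} - ∫ t in (0:ℝ)..x⁻¹, μ.real {ω | E ω ≤ t} := by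
  rw [setOf_div_gt_eq_inter hE hD hx, measureReal_def, hBern _ measurableSet_Iio,
    ENNReal.toReal_ofReal (setIntegral_nonneg (hEmeas measurableSet_Iio) fun ω _ => (hE ω).le),
    setIntegral_lt_eq_mul_sub_intervalIntegral μ hEmeas (ae_of_all _ fun ω => (hE ω).le)
      (inv_nonneg.2 hx.le)]

theorem stmt9_general
    {Ω : Type*} [MeasurableSpace Ω] (ℙ : Measure Ω) [IsProbabilityMeasure ℙ]
    (E D : Ω → ℝ) (hEmeas : Measurable E)
    (hE : ∀ ω, E ω ∈ Set.Ioc (0 : ℝ) 1) (hD : ∀ ω, D ω = 0 ∨ D ω = 1)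
    (hBern : ∀ s : Set ℝ, MeasurableSet s →
      ℙ ({ω | D ω = 1} ∩ E ⁻¹' s) = ENNReal.ofReal (∫ ω in E ⁻¹' s, E ω ∂ℙ))
    (c γ : ℝ) (hc : 0 < c) (hγ : γ ∈ Set.Ioo (1 : ℝ) 2)
    (hG : Tendsto (fun x : ℝ => (ℙ {ω | E ω ≤ x}).toReal / x ^ (γ - 1))
      (nhdsWithin 0 (Set.Ioi 0)) (nhds c))
    (hGpos : ∀ x : ℝ, 0 < x → 0 < (ℙ {ω | E ω ≤ x}).toReal) :
    Tendsto (fun x : ℝ =>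
        x * (ℙ {ω | D ω / E ω > x}).toReal / (ℙ {ω | E ω ≤ 1 / x}).toReal)
      atTop (nhds ((γ - 1) / γ))
    ∧ Tendsto (fun x : ℝ =>
        (ℙ {ω | D ω / E ω > x}).toReal / (c * ((γ - 1) / γ) * x ^ (-γ)))
      atTop (nhds 1) := by
  simp only [← measureReal_def] at hG hGpos ⊢
  have hγ1 := hγ.1
  have hlim := (tendsto_mul_sub_intervalIntegral_div_mul (by linarith) hc.ne'
    (monotone_measureReal_setOf_le ℙ E) hG hGpos
    (G' := fun u => ℙ.real {ω | E ω < u})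
    (fun u => measureReal_mono fun ω (h : E ω < u) => h.le)
    (fun t u htu => measureReal_mono fun ω (h : E ω ≤ t) => h.trans_lt htu)).comp
    tendsto_inv_atTop_nhdsGT_zero
  have htail : Tendsto (fun x : ℝ => x * ℙ.real {ω | D ω / E ω > x} / ℙ.real {ω | E ω ≤ 1 / x})
      atTop (𝓝 ((γ - 1) / γ)) := by
    refine hlim.congr' ?_
    filter_upwards [eventually_gt_atTop 0] with x hx
    have hB := hGpos _ (inv_pos.2 hx)
    rw [Function.comp_apply, measureReal_div_gt_eq ℙ hEmeas (fun ω => (hE ω).1) hD hBern hx,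
      one_div]
    generalize ℙ.real {ω | E ω ≤ x⁻¹} = B at hB ⊢
    field_simp
  refine ⟨htail, ?_⟩
  have hratio :=
    (htail.mul (hG.comp tendsto_inv_atTop_nhdsGT_zero)).div_const (c * ((γ - 1) / γ))
  rw [mul_comm ((γ - 1) / γ) c, div_self (by positivity)] at hratio
  refine hratio.congr' ?_
  filter_upwards [eventually_gt_atTop 0] with x hx
  have hB := hGpos _ (inv_pos.2 hx)
  have := Real.rpow_pos_of_pos hx γ
  rw [Function.comp_apply, one_div, Real.inv_rpow hx.le, Real.rpow_neg hx.le,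
    Real.rpow_sub_one hx.ne']
  generalize ℙ.real {ω | E ω ≤ x⁻¹} = B at hB ⊢
  generalize ℙ.real {ω | D ω / E ω > x} = P
  field_simp

/-- Tail of `W = D/E` when `P[E ≤ x]/x^(γ-1) → c` and `P[D = 1 | E] = E`:
`x P[W > x] / G(1/x) → (γ-1)/γ` and `P[W > x] ~ c ((γ-1)/γ) x^(-γ)`. -/
theorem stmt9
    {Ω : Type*} [MeasurableSpace Ω] (ℙ : Measure Ω) [IsProbabilityMeasure ℙ]
    (E D : Ω → ℝ) (hEmeas : Measurable E) (hDmeas : Measurable D)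
    (hE : ∀ ω, E ω ∈ Set.Ioc (0 : ℝ) 1) (hD : ∀ ω, D ω = 0 ∨ D ω = 1)
    (hBern : ∀ s : Set ℝ, MeasurableSet s →
      ℙ ({ω | D ω = 1} ∩ E ⁻¹' s) = ENNReal.ofReal (∫ ω in E ⁻¹' s, E ω ∂ℙ))
    (c γ : ℝ) (hc : 0 < c) (hγ : γ ∈ Set.Ioo (1 : ℝ) 2)
    (hG : Tendsto (fun x : ℝ => (ℙ {ω | E ω ≤ x}).toReal / x ^ (γ - 1))
      (nhdsWithin 0 (Set.Ioi 0)) (nhds c))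
    (hGpos : ∀ x : ℝ, 0 < x → 0 < (ℙ {ω | E ω ≤ x}).toReal) :
    Tendsto (fun x : ℝ =>
        x * (ℙ {ω | D ω / E ω > x}).toReal / (ℙ {ω | E ω ≤ 1 / x}).toReal)
      atTop (nhds ((γ - 1) / γ))
    ∧ Tendsto (fun x : ℝ =>
        (ℙ {ω | D ω / E ω > x}).toReal / (c * ((γ - 1) / γ) * x ^ (-γ)))
      atTop (nhds 1) :=
  stmt9_general ℙ E D hEmeas hE hD hBern c γ hc hγ hG hGpos
end
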